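/- arXiv:2011.07408 — 7 statements merged into one kernel-verified Lean document; each statement's English description precedes it below -/
import Mathlib

section
/- Every separating set for the invariant ring F_q[V]^G contains at least γ = ⌈log_q(k)⌉ elements. Equivalently, if l_1, ..., l_r ∈ F_q[V]^G form a separating set, then k ≤ q^r. -/
open MvPolynomial

/-- The substitution action of a matrix `M` on polynomials, so that
`(polyAct M f)(v) = f (M.mulVec v)`.  Taking `M = g⁻¹` gives the action
`(g · f)(v) = f (g⁻¹ · v)` of a matrix group on the coordinate ring. -/
noncomputable def polyAct {F : Type*} [CommSemiring F] {n : ℕ}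
    (M : Matrix (Fin n) (Fin n) F) (f : MvPolynomial (Fin n) F) : MvPolynomial (Fin n) F :=
  aeval (fun i => ∑ j, C (M i j) * X j) f

/-! Representatives of distinct orbits are separated, so sending an orbit to the values
`(l 1, …, l r)` at a representative is an injection of the `k` orbits into `F_q ^ r`. -/

theorem card_le_card_pow_of_separating {ι V β : Type*} [Fintype ι] [Fintype β] {r : ℕ}
    {R : V → V → Prop} (w : ι → V) (hw : ∀ j₁ j₂, j₁ ≠ j₂ → ¬ R (w j₁) (w j₂))
    (l : Fin r → V → β) (hsep : ∀ u v, ¬ R u v → ∃ i, l i u ≠ l i v) :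
    Fintype.card ι ≤ Fintype.card β ^ r := by
  have hinj : Function.Injective fun j i => l i (w j) := by
    intro j₁ j₂ hj
    by_contra hne
    obtain ⟨i, hi⟩ := hsep _ _ (hw j₁ j₂ hne)
    exact hi (congrFun hj i)
  simpa using Fintype.card_le_of_injective _ hinj

theorem Matrix.GeneralLinearGroup.exists_mulVec_eq_symm {R : Type*} [CommRing R] {n : ℕ}
    {G : Subgroup (Matrix.GeneralLinearGroup (Fin n) R)} {u v : Fin n → R}
    (h : ∃ g ∈ G, (g : Matrix (Fin n) (Fin n) R).mulVec u = v) :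
    ∃ g ∈ G, (g : Matrix (Fin n) (Fin n) R).mulVec v = u := by
  obtain ⟨g, hg, rfl⟩ := h
  refine ⟨g⁻¹, G.inv_mem hg, ?_⟩
  rw [Matrix.mulVec_mulVec, ← Matrix.GeneralLinearGroup.coe_mul, inv_mul_cancel,
    Matrix.GeneralLinearGroup.coe_one, Matrix.one_mulVec]

theorem stmt0_general {q n k r : ℕ} (F : Type*) [Field F] [Fintype F]
    (hq : Fintype.card F = q)
    (G : Subgroup (Matrix.GeneralLinearGroup (Fin n) F))
    (W : Fin k → Set (Fin n → F))
    (horb : ∀ j, ∃ w : Fin n → F, W j =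
      {u | ∃ g ∈ G, (g : Matrix (Fin n) (Fin n) F).mulVec w = u})
    (hdisj : ∀ j₁ j₂, j₁ ≠ j₂ → Disjoint (W j₁) (W j₂))
    (l : Fin r → MvPolynomial (Fin n) F)
    (hsep : ∀ u v : Fin n → F,
      (¬ ∃ g ∈ G, (g : Matrix (Fin n) (Fin n) F).mulVec u = v) →
      ∃ i, eval u (l i) ≠ eval v (l i)) :
    k ≤ q ^ r ∧ Nat.clog q k ≤ r := by
  choose w hw using horb
  have hmem : ∀ j, w j ∈ W j := fun j => hw j ▸ ⟨1, G.one_mem, by simp⟩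
  have hrep : ∀ j₁ j₂, j₁ ≠ j₂ →
      ¬ ∃ g ∈ G, (g : Matrix (Fin n) (Fin n) F).mulVec (w j₁) = w j₂ := by
    intro j₁ j₂ hne hrel
    have h₁₂ : w j₁ ∈ W j₂ := hw j₂ ▸ Matrix.GeneralLinearGroup.exists_mulVec_eq_symm hrel
    exact (hdisj j₁ j₂ hne).ne_of_mem (hmem j₁) h₁₂ rfl
  have hk : k ≤ q ^ r := by
    simpa [hq] using card_le_card_pow_of_separating w hrep (fun i v => eval v (l i)) hsep
  exact ⟨hk, Nat.clog_le_of_le_pow hk⟩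

/-- if `l 1, …, l r` are invariants forming a separating set for
`F_q[V]^G`, then `k ≤ q ^ r`; equivalently every separating set contains at least
`γ = ⌈log_q k⌉` elements. -/
theorem stmt0 {q n k r : ℕ} (F : Type*) [Field F] [Fintype F]
    (hq : Fintype.card F = q)
    (G : Subgroup (Matrix.GeneralLinearGroup (Fin n) F))
    (W : Fin k → Set (Fin n → F))
    (horb : ∀ j, ∃ w : Fin n → F, W j =
      {u | ∃ g ∈ G, (g : Matrix (Fin n) (Fin n) F).mulVec w = u})
    (hcover : ∀ v : Fin n → F, ∃ j, v ∈ W j)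
    (hdisj : ∀ j₁ j₂, j₁ ≠ j₂ → Disjoint (W j₁) (W j₂))
    (l : Fin r → MvPolynomial (Fin n) F)
    (hinv : ∀ i, ∀ g ∈ G,
      polyAct ((g⁻¹ : Matrix.GeneralLinearGroup (Fin n) F) : Matrix (Fin n) (Fin n) F)
        (l i) = l i)
    (hsep : ∀ u v : Fin n → F,
      (¬ ∃ g ∈ G, (g : Matrix (Fin n) (Fin n) F).mulVec u = v) →
      ∃ i, eval u (l i) ≠ eval v (l i)) :
    k ≤ q ^ r ∧ Nat.clog q k ≤ r :=
  stmt0_general F hq G W horb hdisj l hsep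
end

section
/- Let (a_{ij}) ∈ F^{γ×k} be a matrix whose columns are pairwise different and define t_i = a_{i1} n_1 + ... + a_{ik} n_k for 1 ≤ i ≤ γ. Then t_1, ..., t_γ form a minimal separating set for F_q[V]^G consisting of (possibly non-homogeneous) invariants of degree at most |G|·n·(q−1). -/
/-!
On a `G`-stable set `W` every factor `g · f_W` of `∏_g (g · f_W)` is again the indicator function
of `W`, so `n_j` is the indicator function of the orbit `W_j` and `t_i` takes the constant value
`a_{ij}` on `W_j`; pairwise different columns therefore separate the orbits. Conversely, `r`
functions separating the `k` orbits inject them into `F^r`, so `k ≤ q^r`, i.e. `γ ≤ r`.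
Invariance holds because `G` permutes the factors of `n_j`, and the degree bound because a
linear substitution does not raise the total degree.
-/

open MvPolynomial

/-- `f_w = (-1)^n ∏_i ∏_{a ∈ F \ {w_i}} (x_i - a)`, the indicator polynomial of `w`. -/
noncomputable def fW {F : Type*} [Field F] [Fintype F] [DecidableEq F] {n : ℕ}
    (w : Fin n → F) : MvPolynomial (Fin n) F :=
  (-1) ^ n * ∏ i, ∏ a ∈ (Finset.univ \ {w i}), (X i - C a)

/-- `f_j = ∑_{w ∈ W_j} f_w`, the indicator polynomial of the subset `W ⊆ V`. -/
noncomputable def fOrb {F : Type*} [Field F] [Fintype F] [DecidableEq F] {n : ℕ}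
    (W : Set (Fin n → F)) : MvPolynomial (Fin n) F :=
  ∑ w ∈ (Set.toFinite W).toFinset, fW w

/-- `n_j = ∏_{g ∈ G} (g · f)`, where `(g · f)(v) = f(g⁻¹ · v)`. -/
noncomputable def nInvPoly {F : Type*} [Field F] [Fintype F] {n : ℕ}
    (G : Subgroup (Matrix.GeneralLinearGroup (Fin n) F)) (f : MvPolynomial (Fin n) F) :
    MvPolynomial (Fin n) F :=
  letI : Fintype G := Fintype.ofFinite G
  ∏ g : G, polyAct (((g : Matrix.GeneralLinearGroup (Fin n) F)⁻¹ :
      Matrix.GeneralLinearGroup (Fin n) F) : Matrix (Fin n) (Fin n) F) f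

/-- The Reynolds average `h = (1/|G|) ∑_{g ∈ G} (g · f)`. -/
noncomputable def reynolds {F : Type*} [Field F] [Fintype F] {n : ℕ}
    (G : Subgroup (Matrix.GeneralLinearGroup (Fin n) F)) (f : MvPolynomial (Fin n) F) :
    MvPolynomial (Fin n) F :=
  letI : Fintype G := Fintype.ofFinite G
  C ((Nat.card G : F)⁻¹) * ∑ g : G, polyAct (((g : Matrix.GeneralLinearGroup (Fin n) F)⁻¹ :
      Matrix.GeneralLinearGroup (Fin n) F) : Matrix (Fin n) (Fin n) F) f

/-- A monomial matrix: exactly one nonzero entry in each row and in each column. -/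
def IsMonomialMatrix {F : Type*} [Zero F] {n : ℕ} (M : Matrix (Fin n) (Fin n) F) : Prop :=
  (∀ i, ∃! j, M i j ≠ 0) ∧ (∀ j, ∃! i, M i j ≠ 0)

section PolyAct

variable {F : Type*} [CommSemiring F] {n : ℕ}

lemma polyAct_eq_bind₁ (M : Matrix (Fin n) (Fin n) F) (f : MvPolynomial (Fin n) F) :
    polyAct M f = bind₁ (fun i => ∑ j, C (M i j) * X j) f := by
  rw [polyAct, aeval_eq_bind₁]

lemma eval_polyAct (M : Matrix (Fin n) (Fin n) F) (f : MvPolynomial (Fin n) F) (v : Fin n → F) :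
    eval v (polyAct M f) = eval (M.mulVec v) f := by
  rw [polyAct_eq_bind₁]
  refine (eval₂Hom_bind₁ _ _ _ _).trans (congrArg (eval · f) (funext fun i => ?_))
  simp [Matrix.mulVec, dotProduct]

lemma polyAct_polyAct (M N : Matrix (Fin n) (Fin n) F) (f : MvPolynomial (Fin n) F) :
    polyAct M (polyAct N f) = polyAct (N * M) f := by
  simp only [polyAct_eq_bind₁, bind₁_bind₁, map_sum, map_mul, bind₁_C_right, bind₁_X_right,
    Finset.mul_sum, Matrix.mul_apply, Finset.sum_mul, ← mul_assoc]
  exact congrArg (bind₁ · f) (funext fun i => Finset.sum_comm)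

lemma polyAct_sum_C_mul {ι : Type*} (s : Finset ι) (M : Matrix (Fin n) (Fin n) F) (c : ι → F)
    (f : ι → MvPolynomial (Fin n) F) :
    polyAct M (∑ j ∈ s, C (c j) * f j) = ∑ j ∈ s, C (c j) * polyAct M (f j) := by
  simp [polyAct, algebraMap_eq]

lemma polyAct_prod {ι : Type*} (s : Finset ι) (M : Matrix (Fin n) (Fin n) F)
    (f : ι → MvPolynomial (Fin n) F) : polyAct M (∏ j ∈ s, f j) = ∏ j ∈ s, polyAct M (f j) :=
  map_prod (aeval _) f s

lemma totalDegree_polyAct_le (M : Matrix (Fin n) (Fin n) F) (f : MvPolynomial (Fin n) F) :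
    (polyAct M f).totalDegree ≤ f.totalDegree := by
  have hlinear : ∀ i, (∑ j, C (M i j) * X j).IsHomogeneous 1 := fun i =>
    IsHomogeneous.sum _ _ _ fun j _ => (isHomogeneous_X F j).C_mul _
  conv_lhs => rw [← sum_homogeneousComponent f, polyAct, map_sum]
  refine totalDegree_finsetSum_le fun d hd => ?_
  have hd : d ≤ f.totalDegree := Nat.lt_succ_iff.mp (Finset.mem_range.mp hd)
  simpa using ((homogeneousComponent_isHomogeneous d f).aeval _ hlinear).totalDegree_le.trans
    (by simpa using hd)

end PolyAct

section Indicator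

variable {F : Type*} [Field F] [Fintype F] [DecidableEq F] {n : ℕ}

lemma FiniteField.prod_univ_sdiff_zero : ∏ b ∈ Finset.univ \ {(0 : F)}, b = -1 := by
  have hunits : Finset.univ.map (Function.Embedding.mk ((↑) : Fˣ → F) Units.val_injective) =
      Finset.univ \ {0} := by
    ext b
    simp only [Finset.mem_map, Finset.mem_univ, true_and, Finset.mem_sdiff, Finset.mem_singleton,
      Function.Embedding.coeFn_mk]
    exact isUnit_iff_ne_zero
  rw [← hunits, Finset.prod_map]
  simpa using congrArg Units.val (FiniteField.prod_univ_units_id_eq_neg_one (K := F))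

lemma FiniteField.prod_univ_sdiff_sub (c : F) : ∏ a ∈ Finset.univ \ {c}, (c - a) = -1 := by
  rw [← FiniteField.prod_univ_sdiff_zero]
  refine Finset.prod_equiv (Equiv.subLeft c) (fun a => ?_) fun _ _ => rfl
  simp [sub_eq_zero, eq_comm]

lemma eval_fW (w v : Fin n → F) : eval v (fW w) = if v = w then 1 else 0 := by
  simp only [fW, map_mul, map_pow, map_neg, map_one, map_prod, eval_sub, eval_X, eval_C]
  split_ifs with h
  · simp [h, FiniteField.prod_univ_sdiff_sub, ← mul_pow]
  · obtain ⟨i, hi⟩ := Function.ne_iff.mp h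
    refine mul_eq_zero_of_right _ (Finset.prod_eq_zero (Finset.mem_univ i) ?_)
    exact Finset.prod_eq_zero (i := v i) (by simp [hi]) (sub_self _)

lemma eval_fOrb (W : Set (Fin n → F)) (v : Fin n → F) :
    eval v (fOrb W) = W.indicator 1 v := by
  classical
  simp [fOrb, eval_fW, Set.indicator_apply]

lemma totalDegree_fW_le (w : Fin n → F) : (fW w).totalDegree ≤ n * (Fintype.card F - 1) := by
  have hfactor (i : Fin n) :
      (∏ a ∈ Finset.univ \ {w i}, (X i - C a : MvPolynomial (Fin n) F)).totalDegree ≤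
        Fintype.card F - 1 :=
    calc _ ≤ ∑ a ∈ Finset.univ \ {w i}, (X i - C a : MvPolynomial (Fin n) F).totalDegree :=
          totalDegree_finsetProd _ _
      _ ≤ ∑ a ∈ Finset.univ \ {w i}, 1 :=
          Finset.sum_le_sum fun a _ => (totalDegree_sub_C_le _ _).trans (totalDegree_X i).le
      _ = Fintype.card F - 1 := by simp [Finset.card_sdiff]
  rw [fW]
  calc _ ≤ ((-1) ^ n : MvPolynomial (Fin n) F).totalDegree +
          ∑ i, (∏ a ∈ Finset.univ \ {w i}, (X i - C a : MvPolynomial (Fin n) F)).totalDegree :=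
        (totalDegree_mul _ _).trans (by gcongr; exact totalDegree_finsetProd _ _)
    _ ≤ 0 + ∑ _i : Fin n, (Fintype.card F - 1) := by
        refine add_le_add ?_ (Finset.sum_le_sum fun i _ => hfactor i)
        simpa using totalDegree_pow (-1 : MvPolynomial (Fin n) F) n
    _ = n * (Fintype.card F - 1) := by simp

lemma totalDegree_fOrb_le (W : Set (Fin n → F)) :
    (fOrb W).totalDegree ≤ n * (Fintype.card F - 1) :=
  totalDegree_finsetSum_le fun w _ => totalDegree_fW_le w

end Indicator

section Orbit

variable {F : Type*} [CommRing F] {n : ℕ} (G : Subgroup (Matrix.GeneralLinearGroup (Fin n) F))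

def linearOrbit (w : Fin n → F) : Set (Fin n → F) :=
  {u | ∃ g ∈ G, (g : Matrix (Fin n) (Fin n) F).mulVec w = u}

lemma mem_linearOrbit_self (w : Fin n → F) : w ∈ linearOrbit G w :=
  ⟨1, G.one_mem, by simp⟩

lemma mapsTo_mulVec_linearOrbit (w : Fin n → F) {g : Matrix.GeneralLinearGroup (Fin n) F}
    (hg : g ∈ G) : Set.MapsTo (g : Matrix (Fin n) (Fin n) F).mulVec (linearOrbit G w)
      (linearOrbit G w) := by
  rintro _ ⟨g₀, hg₀, rfl⟩
  exact ⟨g * g₀, mul_mem hg hg₀, by rw [Units.val_mul, ← Matrix.mulVec_mulVec]⟩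

lemma exists_mulVec_eq_of_mem_linearOrbit {w u v : Fin n → F} (hu : u ∈ linearOrbit G w)
    (hv : v ∈ linearOrbit G w) : ∃ g ∈ G, (g : Matrix (Fin n) (Fin n) F).mulVec u = v := by
  obtain ⟨g₁, hg₁, rfl⟩ := hu
  obtain ⟨g₂, hg₂, rfl⟩ := hv
  refine ⟨g₂ * g₁⁻¹, mul_mem hg₂ (inv_mem hg₁), ?_⟩
  rw [Matrix.mulVec_mulVec, ← Units.val_mul, inv_mul_cancel_right]

variable {G}

lemma mapsTo_mulVec_of_eq_linearOrbit {W : Set (Fin n → F)} {w : Fin n → F}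
    (hW : W = linearOrbit G w) : ∀ g ∈ G, Set.MapsTo (g : Matrix (Fin n) (Fin n) F).mulVec W W :=
  hW ▸ fun _ hg => mapsTo_mulVec_linearOrbit G w hg

lemma inv_mulVec_mem_iff {W : Set (Fin n → F)}
    (hW : ∀ g ∈ G, Set.MapsTo (g : Matrix (Fin n) (Fin n) F).mulVec W W)
    {g : Matrix.GeneralLinearGroup (Fin n) F} (hg : g ∈ G) (v : Fin n → F) :
    ((g⁻¹ : Matrix.GeneralLinearGroup (Fin n) F) : Matrix (Fin n) (Fin n) F).mulVec v ∈ W ↔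
      v ∈ W := by
  refine ⟨fun h => ?_, fun h => hW _ (inv_mem hg) h⟩
  simpa [Matrix.mulVec_mulVec, ← Units.val_mul] using hW g hg h

end Orbit

section OrbitProduct

variable {F : Type*} [Field F] [Fintype F] {n : ℕ}
  (G : Subgroup (Matrix.GeneralLinearGroup (Fin n) F))

lemma polyAct_nInvPoly (f : MvPolynomial (Fin n) F) {g : Matrix.GeneralLinearGroup (Fin n) F}
    (hg : g ∈ G) :
    polyAct ((g⁻¹ : Matrix.GeneralLinearGroup (Fin n) F) : Matrix (Fin n) (Fin n) F)
      (nInvPoly G f) = nInvPoly G f := by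
  -- the same instance as inside `nInvPoly`, so that its product can be reindexed
  let _ : Fintype G := Fintype.ofFinite G
  rw [nInvPoly, polyAct_prod]
  simp only [polyAct_polyAct]
  refine Fintype.prod_equiv (Equiv.mulLeft ⟨g, hg⟩) _ _ fun h => ?_
  rw [Equiv.coe_mulLeft, Subgroup.coe_mul, mul_inv_rev, Units.val_mul]

lemma totalDegree_nInvPoly_le (f : MvPolynomial (Fin n) F) :
    (nInvPoly G f).totalDegree ≤ Nat.card G * f.totalDegree := by
  let _ : Fintype G := Fintype.ofFinite G
  rw [nInvPoly, Nat.card_eq_fintype_card, ← smul_eq_mul, ← Finset.card_univ, ← Finset.sum_const]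
  exact (totalDegree_finsetProd _ _).trans
    (Finset.sum_le_sum fun g _ => totalDegree_polyAct_le _ _)

lemma eval_nInvPoly_fOrb [DecidableEq F] {W : Set (Fin n → F)}
    (hW : ∀ g ∈ G, Set.MapsTo (g : Matrix (Fin n) (Fin n) F).mulVec W W) (v : Fin n → F) :
    eval v (nInvPoly G (fOrb W)) = W.indicator 1 v := by
  let _ : Fintype G := Fintype.ofFinite G
  have hfactor (g : G) :
      eval v (polyAct (((g : Matrix.GeneralLinearGroup (Fin n) F)⁻¹ :
        Matrix.GeneralLinearGroup (Fin n) F) : Matrix (Fin n) (Fin n) F) (fOrb W)) =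
        W.indicator 1 v := by
    classical
    rw [eval_polyAct, eval_fOrb]
    exact if_congr (inv_mulVec_mem_iff hW g.2 v) rfl rfl
  rw [nInvPoly, map_prod, Fintype.prod_congr _ _ hfactor, Finset.prod_const]
  by_cases hv : v ∈ W <;> simp [hv]

end OrbitProduct

lemma eval_sum_C_mul_nInvPoly_fOrb {F : Type*} [Field F] [Fintype F] [DecidableEq F] {n : ℕ}
    (G : Subgroup (Matrix.GeneralLinearGroup (Fin n) F)) {ι : Type*} [Fintype ι]
    {W : ι → Set (Fin n → F)}
    (hW : ∀ j, ∀ g ∈ G, Set.MapsTo (g : Matrix (Fin n) (Fin n) F).mulVec (W j) (W j))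
    (hdisj : Pairwise fun j₁ j₂ => Disjoint (W j₁) (W j₂)) (c : ι → F) {j₀ : ι}
    {u : Fin n → F} (hu : u ∈ W j₀) :
    eval u (∑ j, C (c j) * nInvPoly G (fOrb (W j))) = c j₀ := by
  rw [map_sum, Finset.sum_eq_single j₀ (fun j _ hj => ?_) (by simp)]
  · simp [eval_nInvPoly_fOrb G (hW j₀), hu]
  · simp [eval_nInvPoly_fOrb G (hW j), Set.disjoint_left.mp (hdisj (Ne.symm hj)) hu]

lemma totalDegree_sum_C_mul_nInvPoly_fOrb_le {F : Type*} [Field F] [Fintype F] [DecidableEq F]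
    {n : ℕ} (G : Subgroup (Matrix.GeneralLinearGroup (Fin n) F)) {ι : Type*} (s : Finset ι)
    (W : ι → Set (Fin n → F)) (c : ι → F) :
    (∑ j ∈ s, C (c j) * nInvPoly G (fOrb (W j))).totalDegree ≤
      Nat.card G * n * (Fintype.card F - 1) := by
  refine totalDegree_finsetSum_le fun j _ => ?_
  rw [C_mul', mul_assoc]
  exact (totalDegree_smul_le _ _).trans
    ((totalDegree_nInvPoly_le G _).trans (Nat.mul_le_mul_left _ (totalDegree_fOrb_le _)))

lemma Nat.clog_card_le_of_injective {F : Type*} [Fintype F] {k r : ℕ} (f : Fin k → Fin r → F)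
    (hf : Function.Injective f) : Nat.clog (Fintype.card F) k ≤ r :=
  Nat.clog_le_of_le_pow (by simpa using Fintype.card_le_of_injective f hf)

lemma clog_card_le_of_separates_orbits {F : Type*} [CommRing F] [Fintype F] {n k r : ℕ}
    {G : Subgroup (Matrix.GeneralLinearGroup (Fin n) F)} {W : Fin k → Set (Fin n → F)}
    (hW : ∀ j, ∃ w, W j = linearOrbit G w) (hdisj : Pairwise fun j₁ j₂ => Disjoint (W j₁) (W j₂))
    (φ : Fin r → (Fin n → F) → F)
    (hφ : ∀ u v, (¬ ∃ g ∈ G, (g : Matrix (Fin n) (Fin n) F).mulVec u = v) → ∃ i, φ i u ≠ φ i v) :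
    Nat.clog (Fintype.card F) k ≤ r := by
  choose w hw using hW
  have hw_mem (j : Fin k) : w j ∈ W j := (hw j).symm ▸ mem_linearOrbit_self G (w j)
  refine Nat.clog_card_le_of_injective (fun j i => φ i (w j)) fun j₁ j₂ h => ?_
  by_contra hj
  obtain ⟨i, hi⟩ := hφ (w j₁) (w j₂) fun ⟨g, hg, hgw⟩ => Set.disjoint_left.mp (hdisj hj)
    (hgw ▸ mapsTo_mulVec_of_eq_linearOrbit (hw j₁) g hg (hw_mem j₁)) (hw_mem j₂)
  exact hi (congrFun h i)

/-- for a matrix `(a i j)` with pairwise different columns, the invariants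
`t_i = a_{i1} n_1 + ⋯ + a_{ik} n_k` (`1 ≤ i ≤ γ = ⌈log_q k⌉`) form a minimal separating
set for `F_q[V]^G` consisting of elements of degree at most `|G|·n·(q-1)`. -/
theorem stmt1 {q n k : ℕ} (F : Type*) [Field F] [Fintype F] [DecidableEq F]
    (hq : Fintype.card F = q)
    (G : Subgroup (Matrix.GeneralLinearGroup (Fin n) F))
    (W : Fin k → Set (Fin n → F))
    (horb : ∀ j, ∃ w : Fin n → F, W j =
      {u | ∃ g ∈ G, (g : Matrix (Fin n) (Fin n) F).mulVec w = u})
    (hcover : ∀ v : Fin n → F, ∃ j, v ∈ W j)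
    (hdisj : ∀ j₁ j₂, j₁ ≠ j₂ → Disjoint (W j₁) (W j₂))
    (a : Fin (Nat.clog q k) → Fin k → F)
    (hcols : ∀ j₁ j₂ : Fin k, j₁ ≠ j₂ → ∃ i, a i j₁ ≠ a i j₂) :
    let t : Fin (Nat.clog q k) → MvPolynomial (Fin n) F :=
      fun i => ∑ j, C (a i j) * nInvPoly G (fOrb (W j))
    -- the t_i are invariants
    (∀ i, ∀ g ∈ G,
      polyAct ((g⁻¹ : Matrix.GeneralLinearGroup (Fin n) F) : Matrix (Fin n) (Fin n) F)
        (t i) = t i) ∧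
    -- the t_i form a separating set
    (∀ u v : Fin n → F,
      (¬ ∃ g ∈ G, (g : Matrix (Fin n) (Fin n) F).mulVec u = v) →
      ∃ i, eval u (t i) ≠ eval v (t i)) ∧
    -- degree bound |G|·n·(q-1)
    (∀ i, (t i).totalDegree ≤ Nat.card G * n * (q - 1)) ∧
    -- minimality: no separating set of invariants has fewer than γ elements
    (∀ (r : ℕ) (l : Fin r → MvPolynomial (Fin n) F),
      (∀ i, ∀ g ∈ G,
        polyAct ((g⁻¹ : Matrix.GeneralLinearGroup (Fin n) F) : Matrix (Fin n) (Fin n) F)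
          (l i) = l i) →
      (∀ u v : Fin n → F,
        (¬ ∃ g ∈ G, (g : Matrix (Fin n) (Fin n) F).mulVec u = v) →
        ∃ i, eval u (l i) ≠ eval v (l i)) →
      Nat.clog q k ≤ r) := by
  intro t
  have heval {j : Fin k} {u : Fin n → F} (hu : u ∈ W j) (i : Fin (Nat.clog q k)) :
      eval u (t i) = a i j :=
    eval_sum_C_mul_nInvPoly_fOrb G (fun j => mapsTo_mulVec_of_eq_linearOrbit (horb j).choose_spec)
      hdisj (a i) hu
  refine ⟨fun i g hg => ?_, fun u v huv => ?_, fun i => ?_, fun r l _ hl => ?_⟩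
  · simp only [t, polyAct_sum_C_mul, polyAct_nInvPoly G _ hg]
  · obtain ⟨j₁, hu⟩ := hcover u
    obtain ⟨j₂, hv⟩ := hcover v
    obtain ⟨w, hw : W j₁ = linearOrbit G w⟩ := horb j₁
    obtain ⟨i, hi⟩ := hcols j₁ j₂ fun h =>
      huv (exists_mulVec_eq_of_mem_linearOrbit G (hw ▸ hu) (hw ▸ (h ▸ hv : v ∈ W j₁)))
    exact ⟨i, by rwa [heval hu, heval hv]⟩
  · exact hq ▸ totalDegree_sum_C_mul_nInvPoly_fOrb_le G _ W (a i)
  · exact hq ▸ clog_card_le_of_separates_orbits horb hdisj (fun i v => eval v (l i)) hl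
end

section
/- For the action of S_4 on V = F_2^6 coming from its action on 2-element subsets of {1,2,3,4}, the subsets S_1 = {f_1, f_2, f_3, f_4, f_8} and S_2 = {f_1, f_2, f_3, f_5, f_8} are the only separating subsets of M = {f_1, ..., f_10} that are minimal with respect to inclusion. -/
/-!
Each `f_i` is an orbit sum of a monomial `∏_{e ∈ G} x_e`, so its value at a point `u ∈ V`
(a graph on four vertices) is the parity of the number of copies of the pattern graph `G`
inside `u`; in particular it is constant on orbits. The 64 points of `V` fall into the 11
isomorphism classes of graphs on four vertices, so a subset of `M` is separating exactly
when its rows of the 10 × 11 table of values on class representatives separate the columns.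
In that table the pairs (empty graph, one edge), (empty, path of length two),
(empty, perfect matching) and (empty, 4-cycle) are told apart only by `f_1`, `f_2`, `f_3` and
`f_8` respectively, and (star, triangle) only by `f_4` and `f_5`. So every separating subset
contains `S_1` or `S_2`, and both of these separate.
-/

open MvPolynomial

/-- 2-element subsets of `Fin N`, encoded as ordered pairs `(i, j)` with `i < j`. -/
abbrev Edge (N : ℕ) := {p : Fin N × Fin N // p.1 < p.2}

/-- The action of a permutation `σ ∈ S_N` on edges: `σ·{i,j} = {σ(i),σ(j)}`. -/
def edgeMap {N : ℕ} (σ : Equiv.Perm (Fin N)) (e : Edge N) : Edge N :=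
  ⟨(min (σ e.1.1) (σ e.1.2), max (σ e.1.1) (σ e.1.2)), by
    have h : σ e.1.1 ≠ σ e.1.2 := fun h => absurd (σ.injective h) (ne_of_lt e.2)
    exact min_lt_max.mpr h⟩

/-- orbit sum `o(f)`: the sum over the (distinct elements of the) `S_N`-orbit of `f`. -/
noncomputable def orbitSum {N : ℕ} (f : MvPolynomial (Edge N) (ZMod 2)) :
    MvPolynomial (Edge N) (ZMod 2) :=
  letI : DecidableEq (MvPolynomial (Edge N) (ZMod 2)) := Classical.decEq _
  ∑ h ∈ Finset.image (fun σ : Equiv.Perm (Fin N) => rename (edgeMap σ) f) Finset.univ, h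

/-- Two points of `V = F_2^(N choose 2)` lie in the same `S_N`-orbit. -/
def GraphSameOrbit {N : ℕ} (u v : Edge N → ZMod 2) : Prop :=
  ∃ σ : Equiv.Perm (Fin N), ∀ e, u (edgeMap σ e) = v e

/-- A set of polynomials is separating if it separates any two points of `V`
lying in different `S_N`-orbits. -/
def IsSepGraph {N : ℕ} (S : Set (MvPolynomial (Edge N) (ZMod 2))) : Prop :=
  ∀ u v : Edge N → ZMod 2, ¬ GraphSameOrbit u v → ∃ f ∈ S, eval u f ≠ eval v f

namespace S4graphs

/- The six edges of the complete graph on `{1,2,3,4}` (0-indexed), ordered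
x12, x13, x14, x23, x24, x34. -/
def e12 : Edge 4 := ⟨(0, 1), by decide⟩
def e13 : Edge 4 := ⟨(0, 2), by decide⟩
def e14 : Edge 4 := ⟨(0, 3), by decide⟩
def e23 : Edge 4 := ⟨(1, 2), by decide⟩
def e24 : Edge 4 := ⟨(1, 3), by decide⟩
def e34 : Edge 4 := ⟨(2, 3), by decide⟩

noncomputable def f1 : MvPolynomial (Edge 4) (ZMod 2) := orbitSum (X e12)
noncomputable def f2 : MvPolynomial (Edge 4) (ZMod 2) := orbitSum (X e12 * X e13)
noncomputable def f3 : MvPolynomial (Edge 4) (ZMod 2) := orbitSum (X e12 * X e34)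
noncomputable def f4 : MvPolynomial (Edge 4) (ZMod 2) := orbitSum (X e12 * X e13 * X e14)
noncomputable def f5 : MvPolynomial (Edge 4) (ZMod 2) := orbitSum (X e12 * X e13 * X e23)
noncomputable def f6 : MvPolynomial (Edge 4) (ZMod 2) := orbitSum (X e12 * X e13 * X e24)
noncomputable def f7 : MvPolynomial (Edge 4) (ZMod 2) :=
  orbitSum (X e12 * X e13 * X e14 * X e24)
noncomputable def f8 : MvPolynomial (Edge 4) (ZMod 2) :=
  orbitSum (X e12 * X e13 * X e24 * X e34)
noncomputable def f9 : MvPolynomial (Edge 4) (ZMod 2) :=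
  orbitSum (X e12 * X e13 * X e14 * X e23 * X e24)
noncomputable def f10 : MvPolynomial (Edge 4) (ZMod 2) :=
  X e12 * X e13 * X e14 * X e23 * X e24 * X e34

/-- The minimal generating set `M = {f_1, …, f_10}` of `F_2[V]^{S_4}`. -/
noncomputable def M : Set (MvPolynomial (Edge 4) (ZMod 2)) :=
  {f1, f2, f3, f4, f5, f6, f7, f8, f9, f10}

theorem eval_prod_X_indicator {σ R : Type*} [CommSemiring R] [DecidableEq σ] (s t : Finset σ) :
    eval (fun e => if e ∈ s then (1 : R) else 0) (∏ e ∈ t, X e) =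
      if t ⊆ s then 1 else 0 := by
  rw [map_prod]
  simp only [eval_X]
  split_ifs with h
  · exact Finset.prod_eq_one fun e he => if_pos (h he)
  · obtain ⟨e, het, hes⟩ := Finset.not_subset.mp h
    exact Finset.prod_eq_zero het (if_neg hes)

theorem prod_X_injective {σ R : Type*} [CommSemiring R] [Nontrivial R] [DecidableEq σ] :
    Function.Injective fun t : Finset σ => ∏ e ∈ t, (X e : MvPolynomial σ R) := by
  have key {t t' : Finset σ} (h : ∏ e ∈ t, (X e : MvPolynomial σ R) = ∏ e ∈ t', X e) :
      t ⊆ t' := by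
    have h' := congrArg (eval fun e => if e ∈ t' then (1 : R) else 0) h
    rw [eval_prod_X_indicator, eval_prod_X_indicator, if_pos subset_rfl] at h'
    by_contra hne
    exact zero_ne_one ((if_neg hne).symm.trans h')
  exact fun t t' h => (key h).antisymm (key h.symm)

section Action

variable {N : ℕ}

theorem edgeMap_mul (σ τ : Equiv.Perm (Fin N)) (e : Edge N) :
    edgeMap (σ * τ) e = edgeMap σ (edgeMap τ e) := by
  obtain ⟨⟨a, b⟩, hab⟩ := e
  apply Subtype.ext
  simp only [edgeMap, Equiv.Perm.mul_apply]
  rcases le_total (τ a) (τ b) with h | h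
  · simp [min_eq_left h, max_eq_right h]
  · simp [min_eq_right h, max_eq_left h, min_comm, max_comm]

theorem edgeMap_one (e : Edge N) : edgeMap 1 e = e := by
  obtain ⟨⟨a, b⟩, hab⟩ := e
  exact Subtype.ext (by simp [edgeMap, hab.le])

theorem edgeMap_bijective (σ : Equiv.Perm (Fin N)) : Function.Bijective (edgeMap σ) := by
  refine ⟨Function.LeftInverse.injective (g := edgeMap σ⁻¹) fun e => ?_,
    Function.RightInverse.surjective (g := edgeMap σ⁻¹) fun e => ?_⟩
  · rw [← edgeMap_mul, inv_mul_cancel, edgeMap_one]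
  · rw [← edgeMap_mul, mul_inv_cancel, edgeMap_one]

theorem _root_.GraphSameOrbit.symm {u v : Edge N → ZMod 2} (h : GraphSameOrbit u v) :
    GraphSameOrbit v u := by
  obtain ⟨σ, hσ⟩ := h
  refine ⟨σ⁻¹, fun e => ?_⟩
  rw [← hσ, ← edgeMap_mul, mul_inv_cancel, edgeMap_one]

theorem _root_.GraphSameOrbit.trans {u v w : Edge N → ZMod 2} (huv : GraphSameOrbit u v)
    (hvw : GraphSameOrbit v w) : GraphSameOrbit u w := by
  obtain ⟨σ, hσ⟩ := huv
  obtain ⟨τ, hτ⟩ := hvw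
  exact ⟨σ * τ, fun e => by rw [edgeMap_mul, hσ, hτ]⟩

def IsEdgeInvariant {R : Type*} [CommSemiring R] (p : MvPolynomial (Edge N) R) : Prop :=
  ∀ σ : Equiv.Perm (Fin N), rename (edgeMap σ) p = p

theorem IsEdgeInvariant.eval_eq {p : MvPolynomial (Edge N) (ZMod 2)} (hp : IsEdgeInvariant p)
    {u v : Edge N → ZMod 2} (h : GraphSameOrbit u v) : eval u p = eval v p := by
  obtain ⟨σ, h⟩ := h
  calc eval u p = eval u (rename (edgeMap σ) p) := by rw [hp σ]
    _ = eval v p := by rw [eval_rename]; exact congrArg (eval · p) (funext h)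

theorem rename_edgeMap_mul {R : Type*} [CommSemiring R] (σ τ : Equiv.Perm (Fin N))
    (p : MvPolynomial (Edge N) R) :
    rename (edgeMap (σ * τ)) p = rename (edgeMap σ) (rename (edgeMap τ) p) := by
  rw [rename_rename]
  exact congrArg (rename · p) (funext (edgeMap_mul σ τ))

theorem isEdgeInvariant_orbitSum (f : MvPolynomial (Edge N) (ZMod 2)) :
    IsEdgeInvariant (orbitSum f) := by
  classical
  intro σ
  have hinj : Function.Injective (rename (R := ZMod 2) (edgeMap σ)) :=
    rename_injective _ (edgeMap_bijective σ).1
  unfold orbitSum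
  rw [map_sum]
  refine (Finset.sum_image hinj.injOn).symm.trans (congrArg (∑ p ∈ ·, p) ?_)
  ext p
  simp only [Finset.mem_image, Finset.mem_univ, true_and, exists_exists_eq_and,
    ← rename_edgeMap_mul]
  exact ⟨fun ⟨τ, hτ⟩ => ⟨σ * τ, hτ⟩,
    fun ⟨τ, hτ⟩ => ⟨σ⁻¹ * τ, by rwa [mul_inv_cancel_left]⟩⟩

def edgeOrbit (s : Finset (Edge N)) : Finset (Finset (Edge N)) :=
  Finset.univ.image fun σ : Equiv.Perm (Fin N) => s.image (edgeMap σ)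

theorem rename_edgeMap_prod_X {R : Type*} [CommSemiring R] (σ : Equiv.Perm (Fin N))
    (s : Finset (Edge N)) :
    rename (edgeMap σ) (∏ e ∈ s, (X e : MvPolynomial (Edge N) R)) =
      ∏ e ∈ s.image (edgeMap σ), X e := by
  rw [map_prod, Finset.prod_image fun a _ b _ h => (edgeMap_bijective σ).1 h]
  simp only [rename_X]

theorem orbitSum_prod_X (s : Finset (Edge N)) :
    orbitSum (∏ e ∈ s, X e) =
      ∑ t ∈ edgeOrbit s, ∏ e ∈ t, (X e : MvPolynomial (Edge N) (ZMod 2)) := by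
  classical
  unfold orbitSum
  refine Eq.trans (congrArg (∑ p ∈ ·, p) ?_) (Finset.sum_image prod_X_injective.injOn)
  ext p
  simp only [edgeOrbit, Finset.mem_image, Finset.mem_univ, true_and, exists_exists_eq_and,
    rename_edgeMap_prod_X]

theorem eval_orbitSum_prod_X (s : Finset (Edge N)) (u : Edge N → ZMod 2) :
    eval u (orbitSum (∏ e ∈ s, X e)) = ∑ t ∈ edgeOrbit s, ∏ e ∈ t, u e := by
  simp only [orbitSum_prod_X, map_sum, map_prod, eval_X]

theorem isEdgeInvariant_prod_X_univ {R : Type*} [CommSemiring R] :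
    IsEdgeInvariant (∏ e : Edge N, (X e : MvPolynomial (Edge N) R)) := fun σ => by
  rw [rename_edgeMap_prod_X, Finset.image_univ_of_surjective (edgeMap_bijective σ).2]

theorem orbitSum_eq_self {f : MvPolynomial (Edge N) (ZMod 2)} (hf : IsEdgeInvariant f) :
    orbitSum f = f := by
  unfold orbitSum
  rw [show (fun σ => rename (edgeMap σ) f) = fun _ => f from funext hf]
  simp [Finset.image_const Finset.univ_nonempty]

end Action

theorem minimal_iff_eq_or_eq {α : Type*} [PartialOrder α] {P : α → Prop} {m a b : α}
    (ha : a ≤ m) (hb : b ≤ m) (hPa : P a) (hPb : P b) (hab : ¬ a ≤ b) (hba : ¬ b ≤ a)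
    (hcover : ∀ t ≤ m, P t → a ≤ t ∨ b ≤ t) {s : α} (hs : s ≤ m) :
    Minimal P s ↔ s = a ∨ s = b := by
  constructor
  · intro h
    exact (hcover s hs h.prop).imp (fun h' => (h.eq_of_le hPa h').symm)
      fun h' => (h.eq_of_le hPb h').symm
  · rintro (rfl | rfl)
    · refine minimal_iff.2 ⟨hPa, fun t hPt hts => ?_⟩
      exact ((hcover t (hts.trans ha) hPt).resolve_right fun h => hba (h.trans hts)).antisymm hts
    · refine minimal_iff.2 ⟨hPb, fun t hPt hts => ?_⟩
      exact ((hcover t (hts.trans hb) hPt).resolve_left fun h => hab (h.trans hts)).antisymm hts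

def pattern : Fin 10 → Finset (Edge 4) :=
  ![{e12}, {e12, e13}, {e12, e34}, {e12, e13, e14}, {e12, e13, e23}, {e12, e13, e24},
    {e12, e13, e14, e24}, {e12, e13, e24, e34}, {e12, e13, e14, e23, e24},
    {e12, e13, e14, e23, e24, e34}]

-- Indices are 0-based, `gen i = f_(i+1)`: the index sets `{0, 1, 2, 3, 7}` and `{0, 1, 2, 4, 7}`
-- below stand for `S_1` and `S_2`.
noncomputable def gen : Fin 10 → MvPolynomial (Edge 4) (ZMod 2) :=
  ![f1, f2, f3, f4, f5, f6, f7, f8, f9, f10]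

theorem M_eq_range_gen : M = Set.range gen := by
  simp only [M, gen, Matrix.range_cons, Matrix.range_empty, Set.union_empty, Set.singleton_union]

theorem gen_eq_orbitSum (i : Fin 10) : gen i = orbitSum (∏ e ∈ pattern i, X e) := by
  have hf10 : f10 = orbitSum (∏ e ∈ pattern 9, X e) := by
    have huniv : pattern 9 = Finset.univ := by decide
    rw [huniv, orbitSum_eq_self isEdgeInvariant_prod_X_univ, ← huniv]
    simp +decide [f10, pattern, Finset.prod_insert, mul_assoc]
  fin_cases i <;> simp +decide [gen, pattern, f1, f2, f3, f4, f5, f6, f7, f8, f9, hf10,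
    Finset.prod_insert, mul_assoc]

def repGraph : Fin 11 → Finset (Edge 4) :=
  ![∅, {e12}, {e12, e34}, {e12, e13}, {e12, e13, e14}, {e12, e13, e23}, {e12, e13, e24},
    {e12, e13, e14, e24}, {e12, e13, e24, e34}, {e12, e13, e14, e23, e24}, Finset.univ]

def rep (k : Fin 11) : Edge 4 → ZMod 2 := fun e => if e ∈ repGraph k then 1 else 0

def table : Fin 10 → Fin 11 → ZMod 2 :=
  ![![0,1,0,0,1,1,1,0,0,1,0], ![0,0,0,1,1,1,0,1,0,0,0], ![0,0,1,0,0,0,1,1,0,0,1],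
    ![0,0,0,0,1,0,0,1,0,0,0], ![0,0,0,0,0,1,0,1,0,0,0], ![0,0,0,0,0,0,1,0,0,0,0],
    ![0,0,0,0,0,0,0,1,0,0,0], ![0,0,0,0,0,0,0,0,1,1,1], ![0,0,0,0,0,0,0,0,0,1,0],
    ![0,0,0,0,0,0,0,0,0,0,1]]

set_option maxHeartbeats 4000000 in
theorem eval_rep_gen (i : Fin 10) (k : Fin 11) : eval (rep k) (gen i) = table i k := by
  rw [gen_eq_orbitSum, eval_orbitSum_prod_X]
  revert i k
  decide

set_option maxHeartbeats 8000000 in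
set_option maxRecDepth 100000 in
theorem exists_sameOrbit_rep : ∀ u : Edge 4 → ZMod 2, ∃ k, GraphSameOrbit u (rep k) := by
  unfold GraphSameOrbit
  decide

theorem isEdgeInvariant_gen (i : Fin 10) : IsEdgeInvariant (gen i) :=
  gen_eq_orbitSum i ▸ isEdgeInvariant_orbitSum _

theorem not_sameOrbit_rep {k l : Fin 11} (hkl : k ≠ l) : ¬ GraphSameOrbit (rep k) (rep l) :=
  fun h => by
    obtain ⟨i, hi⟩ :=
      (by decide : ∀ k l : Fin 11, k ≠ l → ∃ i, table i k ≠ table i l) k l hkl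
    exact hi (by rw [← eval_rep_gen, ← eval_rep_gen, (isEdgeInvariant_gen i).eval_eq h])

theorem gen_injective : Function.Injective gen := fun i j h => by
  by_contra hij
  obtain ⟨k, hk⟩ :=
    (by decide : ∀ i j : Fin 10, i ≠ j → ∃ k, table i k ≠ table j k) i j hij
  exact hk (by rw [← eval_rep_gen, ← eval_rep_gen, h])

def SeparatesColumns (I : Set (Fin 10)) : Prop :=
  ∀ k l : Fin 11, k ≠ l → ∃ i ∈ I, table i k ≠ table i l

theorem isSepGraph_image_gen_iff (I : Set (Fin 10)) :
    IsSepGraph (gen '' I) ↔ SeparatesColumns I := by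
  constructor
  · intro h k l hkl
    obtain ⟨_, ⟨i, hi, rfl⟩, hne⟩ := h _ _ (not_sameOrbit_rep hkl)
    exact ⟨i, hi, by rwa [eval_rep_gen, eval_rep_gen] at hne⟩
  · intro h u v huv
    obtain ⟨k, hk⟩ := exists_sameOrbit_rep u
    obtain ⟨l, hl⟩ := exists_sameOrbit_rep v
    obtain ⟨i, hi, hne⟩ := h k l fun hkl => huv (hk.trans (hkl ▸ hl.symm))
    refine ⟨gen i, ⟨i, hi, rfl⟩, ?_⟩
    rwa [(isEdgeInvariant_gen i).eval_eq hk, (isEdgeInvariant_gen i).eval_eq hl, eval_rep_gen,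
      eval_rep_gen]

theorem separatesColumns_01237 : SeparatesColumns ↑({0, 1, 2, 3, 7} : Finset (Fin 10)) := by
  simp only [SeparatesColumns, Finset.mem_coe]
  decide

theorem separatesColumns_01247 : SeparatesColumns ↑({0, 1, 2, 4, 7} : Finset (Fin 10)) := by
  simp only [SeparatesColumns, Finset.mem_coe]
  decide

theorem subset_or_subset_of_separatesColumns {J : Set (Fin 10)} (hJ : SeparatesColumns J) :
    ↑({0, 1, 2, 3, 7} : Finset (Fin 10)) ⊆ J ∨
      ↑({0, 1, 2, 4, 7} : Finset (Fin 10)) ⊆ J := by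
  have forced (k l : Fin 11) (hkl : k ≠ l) (A : Finset (Fin 10))
      (hA : ∀ i, table i k ≠ table i l → i ∈ A) : ∃ i ∈ A, i ∈ J :=
    let ⟨i, hiJ, hne⟩ := hJ k l hkl
    ⟨i, hA i hne, hiJ⟩
  have h0 : (0 : Fin 10) ∈ J := by simpa using forced 0 1 (by decide) {0} (by decide)
  have h1 : (1 : Fin 10) ∈ J := by simpa using forced 0 3 (by decide) {1} (by decide)
  have h2 : (2 : Fin 10) ∈ J := by simpa using forced 0 2 (by decide) {2} (by decide)
  have h7 : (7 : Fin 10) ∈ J := by simpa using forced 0 8 (by decide) {7} (by decide)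
  have h34 : (3 : Fin 10) ∈ J ∨ (4 : Fin 10) ∈ J := by
    simpa using forced 4 5 (by decide) {3, 4} (by decide)
  simp only [Finset.coe_insert, Finset.coe_singleton, Set.insert_subset_iff,
    Set.singleton_subset_iff]
  exact h34.imp (fun h3 => ⟨h0, h1, h2, h3, h7⟩) fun h4 => ⟨h0, h1, h2, h4, h7⟩

/-- `S_1 = {f1,f2,f3,f4,f8}` and `S_2 = {f1,f2,f3,f5,f8}` are the only
separating subsets of `M` that are minimal with respect to inclusion. -/
theorem stmt9 (S : Set (MvPolynomial (Edge 4) (ZMod 2))) (hS : S ⊆ M) :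
    (IsSepGraph S ∧ ∀ T ⊂ S, ¬ IsSepGraph T) ↔
      (S = {f1, f2, f3, f4, f8} ∨ S = {f1, f2, f3, f5, f8}) := by
  have hS1 : ({f1, f2, f3, f4, f8} : Set _) = gen '' ↑({0, 1, 2, 3, 7} : Finset (Fin 10)) := by
    simp [Set.image_insert_eq, gen]
  have hS2 : ({f1, f2, f3, f5, f8} : Set _) = gen '' ↑({0, 1, 2, 4, 7} : Finset (Fin 10)) := by
    simp [Set.image_insert_eq, gen]
  have hM (I : Set (Fin 10)) : gen '' I ⊆ M := M_eq_range_gen ▸ Set.image_subset_range gen I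
  have hnot (I J : Finset (Fin 10)) (h : ¬ I ⊆ J) : ¬ gen '' ↑I ⊆ gen '' ↑J := by
    rwa [Set.image_subset_image_iff gen_injective, Finset.coe_subset]
  rw [← Set.minimal_iff_forall_ssubset, hS1, hS2]
  refine minimal_iff_eq_or_eq (hM _) (hM _)
    ((isSepGraph_image_gen_iff _).2 separatesColumns_01237)
    ((isSepGraph_image_gen_iff _).2 separatesColumns_01247)
    (hnot _ _ (by decide)) (hnot _ _ (by decide)) (fun T hTM hT => ?_) hS
  obtain ⟨J, rfl⟩ : ∃ J, gen '' J = T :=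
    ⟨_, Set.image_preimage_eq_of_subset (M_eq_range_gen ▸ hTM)⟩
  exact (subset_or_subset_of_separatesColumns ((isSepGraph_image_gen_iff J).1 hT)).imp
    (Set.image_mono ·) (Set.image_mono ·)

end S4graphs
end

section
/- For every 0 ≤ b < a ≤ n with Δ = a − b, the invariants {s_{2^r} | 0 ≤ r ≤ ⌊log_2(Δ)⌋} separate the points e_a and e_b of F_2^n; that is, there exists r with 0 ≤ r ≤ ⌊log_2(a−b)⌋ such that C(a, 2^r) ≢ C(b, 2^r) (mod 2). -/
/-!
By Lucas' theorem `C(m, 2^r) mod 2` is the `r`-th binary digit of `m`, and `s_t(e_i) = C(i, t)`.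
For `r = v₂(a - b)` we have `2^r ≤ a - b`, and since `a ≡ b mod 2^r` while `(a - b) / 2^r` is
odd, the `r`-th binary digits of `a` and `b` differ.
-/

open MvPolynomial

/-- `e_i ∈ F_2^n`: the vector whose first `i` coordinates are `1` and the rest `0`. -/
def eVec (n i : ℕ) : Fin n → ZMod 2 := fun j => if (j : ℕ) < i then 1 else 0

theorem Nat.choose_two_pow_mod_two (m r : ℕ) : m.choose (2 ^ r) % 2 = m / 2 ^ r % 2 := by
  induction r generalizing m with
  | zero => simp
  | succ r ih =>
    have lucas := Choose.choose_modEq_choose_mod_mul_choose_div_nat (n := m) (k := 2 ^ (r + 1))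
      (p := 2)
    rw [Nat.pow_succ', Nat.mul_mod_right, Nat.mul_div_cancel_left _ two_pos,
      Nat.choose_zero_right, one_mul] at lucas
    rw [Nat.pow_succ', lucas, ih, Nat.div_div_eq_div_mul]

theorem MvPolynomial.eval_boole_esymm {σ R : Type*} [Fintype σ] [CommSemiring R]
    (p : σ → Prop) [DecidablePred p] (t : ℕ) :
    eval (fun j => if p j then 1 else 0) (esymm σ R t) =
      (Finset.univ.filter p).card.choose t := by
  simp only [esymm, map_sum, eval_prod, eval_X, Finset.prod_boole, Finset.sum_boole]
  rw [← Finset.card_powersetCard]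
  congr 2
  ext s
  simp [Finset.mem_powersetCard, Finset.subset_iff, and_comm]

theorem eval_esymm_eVec {n i : ℕ} (hi : i ≤ n) (t : ℕ) :
    eval (eVec n i) (esymm (Fin n) (ZMod 2) t) = i.choose t := by
  unfold eVec
  rw [eval_boole_esymm, Fin.card_filter_val_lt, min_eq_right hi]

theorem Nat.exists_two_pow_dvd_sub_and_div_two_pow_mod_two_ne {a b : ℕ} (hb : b < a) :
    ∃ r, 2 ^ r ∣ a - b ∧ a / 2 ^ r % 2 ≠ b / 2 ^ r % 2 := by
  set r := (a - b).factorization 2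
  have hdvd : 2 ^ r ∣ a - b := Nat.ordProj_dvd _ _
  refine ⟨r, hdvd, ?_⟩
  have hodd : ¬ 2 ∣ (a - b) / 2 ^ r := Nat.not_dvd_ordCompl Nat.prime_two (by omega)
  have hmod : b % 2 ^ r = a % 2 ^ r := (Nat.modEq_iff_dvd' hb.le).mpr hdvd
  have hsub : a - b = 2 ^ r * (a / 2 ^ r - b / 2 ^ r) := by
    rw [Nat.mul_sub]
    have := Nat.div_add_mod a (2 ^ r)
    have := Nat.div_add_mod b (2 ^ r)
    omega
  rw [hsub, Nat.mul_div_cancel_left _ (Nat.two_pow_pos r)] at hodd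
  omega

/-- for `0 ≤ b < a ≤ n` with `Δ = a - b`, the invariants
`{s_{2^r} | 0 ≤ r ≤ ⌊log_2 Δ⌋}` separate `e_a` and `e_b`; that is, there is an
`r ≤ ⌊log_2(a-b)⌋` with `C(a, 2^r) ≢ C(b, 2^r) (mod 2)`. -/
theorem stmt13 (n a b : ℕ) (hb : b < a) (ha : a ≤ n) :
    ∃ r, r ≤ Nat.log 2 (a - b) ∧
      eval (eVec n a) (esymm (Fin n) (ZMod 2) (2 ^ r)) ≠
        eval (eVec n b) (esymm (Fin n) (ZMod 2) (2 ^ r)) ∧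
      Nat.choose a (2 ^ r) % 2 ≠ Nat.choose b (2 ^ r) % 2 := by
  obtain ⟨r, hdvd, hbit⟩ := Nat.exists_two_pow_dvd_sub_and_div_two_pow_mod_two_ne hb
  have hchoose : a.choose (2 ^ r) % 2 ≠ b.choose (2 ^ r) % 2 := by
    rwa [Nat.choose_two_pow_mod_two, Nat.choose_two_pow_mod_two]
  refine ⟨r, Nat.le_log_of_pow_le one_lt_two (Nat.le_of_dvd (by omega) hdvd), ?_, hchoose⟩
  rw [eval_esymm_eVec ha, eval_esymm_eVec (hb.le.trans ha), Ne, ZMod.natCast_eq_natCast_iff']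
  exact hchoose
end

section
/- Let S_n act on V = F_2^n by permuting coordinates. Then S_{n,1} = {s_{2^r} | 0 ≤ r ≤ ⌊log_2(n)⌋} is a minimal separating set for F_2[V]^{S_n} containing the least possible number of elements for a separating set, namely ⌈log_2(n+1)⌉ elements. -/
/-!
Over `F_2`, the value of `s_k` at a point of Hamming weight `w` is `(w choose k)`, and by Lucas's
theorem `(w choose 2^r)` is the `r`-th binary digit of `w`. The `S_n`-orbits are exactly the weight
classes, so the `s_{2^r}` with `2^r ≤ n` read off the whole weight and separate. Conversely, `r`
separating invariants map the `n + 1` orbits injectively into `F_2^r`, whence `n + 1 ≤ 2^r`.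
-/

open MvPolynomial

/-- The set `S_{n,1} = {s_{2^r} | 0 ≤ r ≤ ⌊log_2 n⌋}` of elementary symmetric
polynomials over `F_2` whose degree is a power of two at most `n`. -/
def Sn1 (n : ℕ) : Set (MvPolynomial (Fin n) (ZMod 2)) :=
  {f | ∃ r ≤ Nat.log 2 n, f = esymm (Fin n) (ZMod 2) (2 ^ r)}

/-- Two points of `F_2^n` lie in the same `S_n`-orbit (for the permutation action). -/
def SymSameOrbit {n : ℕ} (u v : Fin n → ZMod 2) : Prop :=
  ∃ σ : Equiv.Perm (Fin n), ∀ i, u (σ i) = v i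

open Finset

theorem Nat.clog_add_one_eq_log_add_one {b n : ℕ} (hb : 1 < b) (hn : n ≠ 0) :
    Nat.clog b (n + 1) = Nat.log b n + 1 := by
  refine le_antisymm ((Nat.clog_le_iff_le_pow hb).2 (Nat.lt_pow_succ_log_self hb n)) ?_
  exact (Nat.lt_clog_iff_pow_lt hb).2 (Nat.lt_succ_of_le (Nat.pow_log_le_self b hn))

theorem natCast_choose_prime_pow (p : ℕ) [Fact p.Prime] (m r : ℕ) :
    (m.choose (p ^ r) : ZMod p) = (m / p ^ r : ℕ) := by
  induction r generalizing m with
  | zero => simp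
  | succ r ih =>
    have hp : 0 < p := (Fact.out : p.Prime).pos
    have lucas := @Choose.choose_modEq_choose_mod_mul_choose_div_nat m (p ^ (r + 1)) p _
    rw [pow_succ, Nat.mul_mod_left, Nat.mul_div_cancel _ hp, Nat.choose_zero_right,
      one_mul] at lucas
    rw [pow_succ, (ZMod.natCast_eq_natCast_iff _ _ _).2 lucas, ih, Nat.div_div_eq_div_mul,
      mul_comm]

theorem exists_le_log_div_two_pow_mod_ne {n a b : ℕ} (ha : a ≤ n) (hb : b ≤ n) (hab : a ≠ b) :
    ∃ r ≤ Nat.log 2 n, a / 2 ^ r % 2 ≠ b / 2 ^ r % 2 := by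
  by_contra! h
  refine hab (Nat.eq_of_testBit_eq fun r => ?_)
  rcases le_or_gt r (Nat.log 2 n) with hr | hr
  · simp [Nat.testBit_eq_decide_div_mod_eq, h r hr]
  · have hn : n < 2 ^ r := Nat.lt_pow_of_log_lt one_lt_two hr
    rw [Nat.testBit_eq_false_of_lt (ha.trans_lt hn), Nat.testBit_eq_false_of_lt (hb.trans_lt hn)]

section Esymm

variable {σ R : Type*} [Fintype σ] [CommSemiring R]

theorem eval_indicator_esymm [DecidableEq σ] (s : Finset σ) (k : ℕ) :
    eval (fun i => if i ∈ s then 1 else 0) (esymm σ R k) = ((#s).choose k : R) := by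
  have hsub : (powersetCard k univ).filter (· ⊆ s) = powersetCard k s := by
    ext t; simp [mem_powersetCard, and_comm]
  simp only [esymm, map_sum, map_prod, eval_X, prod_boole, ← Finset.subset_iff]
  rw [sum_boole, hsub, card_powersetCard]

theorem esymm_injOn [Nontrivial R] : Set.InjOn (esymm σ R) (Set.Iic (Fintype.card σ)) := by
  classical
  suffices h : ∀ k l, k ≤ Fintype.card σ → k < l → esymm σ R k ≠ esymm σ R l by
    intro k hk l hl hkl
    by_contra hne
    rcases lt_or_gt_of_ne hne with hlt | hlt
    exacts [h k l hk hlt hkl, h l k hl hlt hkl.symm]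
  intro k l hk hlt hkl
  obtain ⟨s, -, hs⟩ := exists_subset_card_eq (s := (univ : Finset σ)) (by simpa using hk)
  -- at the indicator of a `k`-set, `s_k` takes the value `1` and `s_l` the value `0`
  have := congrArg (eval (fun i => if i ∈ s then (1 : R) else 0)) hkl
  simp [eval_indicator_esymm, hs, Nat.choose_eq_zero_of_lt hlt] at this

end Esymm

section ZModTwo

variable {ι : Type*} [Fintype ι]

theorem ZMod.two_eq_iff_ne_zero_iff {x y : ZMod 2} : x = y ↔ (x ≠ 0 ↔ y ≠ 0) := by
  revert x y; decide

theorem eval_esymm_zmod_two (u : ι → ZMod 2) (k : ℕ) :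
    eval u (esymm ι (ZMod 2) k) = ((hammingNorm u).choose k : ZMod 2) := by
  classical
  have hu : u = fun i => if i ∈ ({i | u i ≠ 0} : Finset ι) then 1 else 0 := by
    ext i; rw [ZMod.two_eq_iff_ne_zero_iff]; split_ifs <;> simp_all
  rw [hu, eval_indicator_esymm, ← hu]
  rfl

theorem eval_esymm_two_pow (u : ι → ZMod 2) (r : ℕ) :
    eval u (esymm ι (ZMod 2) (2 ^ r)) = (hammingNorm u / 2 ^ r : ℕ) := by
  rw [eval_esymm_zmod_two, natCast_choose_prime_pow]

theorem exists_hammingNorm_eq {k : ℕ} (hk : k ≤ Fintype.card ι) :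
    ∃ u : ι → ZMod 2, hammingNorm u = k := by
  classical
  obtain ⟨s, -, rfl⟩ := exists_subset_card_eq (s := (univ : Finset ι)) (by simpa using hk)
  exact ⟨fun i => if i ∈ s then 1 else 0, by simp [hammingNorm]⟩

theorem exists_perm_comp_eq_iff_hammingNorm_eq [DecidableEq ι] (u v : ι → ZMod 2) :
    (∃ σ : Equiv.Perm ι, ∀ i, u (σ i) = v i) ↔ hammingNorm u = hammingNorm v := by
  constructor
  · rintro ⟨σ, hσ⟩
    exact (card_equiv σ (by simp [hσ])).symm
  · intro h
    obtain ⟨σ, hσ⟩ := Equiv.Perm.exists_map_finset_eq {i | v i ≠ 0} {i | u i ≠ 0} h.symm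
    refine ⟨σ, fun i => ZMod.two_eq_iff_ne_zero_iff.2 ?_⟩
    simpa using (Finset.ext_iff.1 hσ (σ i)).symm

theorem card_add_one_le_two_pow_of_separates {r : ℕ} (f : Fin r → (ι → ZMod 2) → ZMod 2)
    (hf : ∀ u v, hammingNorm u ≠ hammingNorm v → ∃ i, f i u ≠ f i v) :
    Fintype.card ι + 1 ≤ 2 ^ r := by
  choose pt hpt using fun k : Fin (Fintype.card ι + 1) =>
    exists_hammingNorm_eq (Nat.lt_succ_iff.1 k.2)
  have hinj : Function.Injective fun k i => f i (pt k) := by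
    intro k l hkl
    by_contra hne
    obtain ⟨i, hi⟩ := hf (pt k) (pt l) (by rw [hpt, hpt]; exact Fin.val_ne_of_ne hne)
    exact hi (congrFun hkl i)
  simpa using Fintype.card_le_of_injective _ hinj

end ZModTwo

theorem symSameOrbit_iff {n : ℕ} (u v : Fin n → ZMod 2) :
    SymSameOrbit u v ↔ hammingNorm u = hammingNorm v :=
  exists_perm_comp_eq_iff_hammingNorm_eq u v

theorem Sn1_separates (n : ℕ) (u v : Fin n → ZMod 2) (huv : ¬ SymSameOrbit u v) :
    ∃ f ∈ Sn1 n, eval u f ≠ eval v f := by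
  have hle : ∀ w : Fin n → ZMod 2, hammingNorm w ≤ n := fun w =>
    hammingNorm_le_card_fintype.trans_eq (Fintype.card_fin n)
  obtain ⟨r, hr, hne⟩ := exists_le_log_div_two_pow_mod_ne (hle u) (hle v)
    (mt (symSameOrbit_iff u v).2 huv)
  refine ⟨_, ⟨r, hr, rfl⟩, ?_⟩
  rwa [eval_esymm_two_pow, eval_esymm_two_pow, Ne, ZMod.natCast_eq_natCast_iff']

theorem Sn1_eq_image (n : ℕ) :
    Sn1 n = (fun r => esymm (Fin n) (ZMod 2) (2 ^ r)) '' Set.Iic (Nat.log 2 n) := by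
  ext f
  simp [Sn1, eq_comm]

theorem ncard_Sn1 {n : ℕ} (hn : n ≠ 0) : (Sn1 n).ncard = Nat.clog 2 (n + 1) := by
  have hinj : Set.InjOn (fun r => esymm (Fin n) (ZMod 2) (2 ^ r)) (Set.Iic (Nat.log 2 n)) := by
    refine esymm_injOn.comp (Nat.pow_right_injective le_rfl).injOn fun r hr => ?_
    simpa using (Nat.pow_le_pow_right two_pos hr).trans (Nat.pow_log_le_self 2 hn)
  rw [Sn1_eq_image, hinj.ncard_image, Nat.clog_add_one_eq_log_add_one one_lt_two hn,
    ← Finset.coe_Iic, Set.ncard_coe_finset, Nat.card_Iic]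

/-- `S_{n,1} = {s_{2^r} | 0 ≤ r ≤ ⌊log_2 n⌋}` is a minimal separating set
for `F_2[V]^{S_n}` containing the least possible number of elements for a separating
set, namely `⌈log_2(n+1)⌉` of them. -/
theorem stmt14 (n : ℕ) (hn : 1 ≤ n) :
    -- S_{n,1} is separating
    (∀ u v : Fin n → ZMod 2, ¬ SymSameOrbit u v →
      ∃ f ∈ Sn1 n, eval u f ≠ eval v f) ∧
    -- it has exactly ⌈log_2(n+1)⌉ elements
    (Sn1 n).ncard = Nat.clog 2 (n + 1) ∧
    -- and no separating set of symmetric polynomials has fewer elements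
    (∀ (r : ℕ) (l : Fin r → MvPolynomial (Fin n) (ZMod 2)),
      (∀ i, ∀ σ : Equiv.Perm (Fin n), rename (fun j => σ j) (l i) = l i) →
      (∀ u v : Fin n → ZMod 2, ¬ SymSameOrbit u v →
        ∃ i, eval u (l i) ≠ eval v (l i)) →
      Nat.clog 2 (n + 1) ≤ r) := by
  refine ⟨Sn1_separates n, ncard_Sn1 (by omega), fun r l _ hsep => ?_⟩
  refine Nat.clog_le_of_le_pow ?_
  have := card_add_one_le_two_pow_of_separates (fun i u => eval u (l i))
    fun u v huv => hsep u v (mt (symSameOrbit_iff u v).1 huv)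
  rwa [Fintype.card_fin] at this
end

section
/- Let J ⊂ {1,...,n} and A ⊂ ℕ^m be subsets such that S_J = {s_j | j ∈ J} is a separating set for F[V]^{S_n} and {σ_t(α) | 1 ≤ t ≤ n, α ∈ A} is a separating set for F[V^m]^{S_n}. Then {σ_j(α) | j ∈ J, α ∈ A} is a separating set for F[V^m]^{S_n}. -/
/-!
Evaluating `σ_t(α)` at `u ∈ V^m` gives the elementary symmetric polynomial `s_t` evaluated at the
vector `u^α = (u^α_1, …, u^α_n) ∈ F^n`. If all `σ_j(α)`, `j ∈ J`, agree at `u` and `v`, then `S_J`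
does not separate `u^α` and `v^α`, so these are permutations of each other and hence every `s_t`,
i.e. every `σ_t(α)`, agrees at `u` and `v`. By the separating property of
`{σ_t(α) | α ∈ A}`, `u` and `v` then lie in the same `S_n`-orbit.
-/

open MvPolynomial

/-- The elementary multisymmetric polynomial
`σ_t(α) = Σ_{i_1 < … < i_t} x^α_{i_1} ⋯ x^α_{i_t}` in the variables
`x(j)_i` (for `1 ≤ i ≤ n`, `1 ≤ j ≤ m`), where `x^α_i = ∏_j x(j)_i^{α_j}`.
The variable `x(j)_i` is indexed by the pair `(j, i)`. -/
noncomputable def msym {F : Type*} [CommSemiring F] (n m : ℕ) (t : ℕ) (α : Fin m → ℕ) :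
    MvPolynomial (Fin m × Fin n) F :=
  ∑ s ∈ Finset.powersetCard t (Finset.univ : Finset (Fin n)),
    ∏ i ∈ s, ∏ j, (X (j, i) : MvPolynomial (Fin m × Fin n) F) ^ (α j)

lemma eval_msym {F : Type*} [CommSemiring F] (n m t : ℕ) (α : Fin m → ℕ)
    (u : Fin m × Fin n → F) :
    eval u (msym n m t α) = eval (fun i => ∏ j, u (j, i) ^ α j) (esymm (Fin n) F t) := by
  simp [msym, esymm]

lemma eval_esymm_comp_perm {ι R : Type*} [Fintype ι] [CommSemiring R] (u : ι → R)
    (σ : Equiv.Perm ι) (t : ℕ) :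
    eval (u ∘ σ) (esymm ι R t) = eval u (esymm ι R t) := by
  rw [← eval_rename, esymm_isSymmetric ι R t σ]

lemma eval_esymm_eq_of_forall_mem {ι R : Type*} [Fintype ι] [CommSemiring R] {J : Set ℕ}
    (hSJ : ∀ u v : ι → R, (¬ ∃ σ : Equiv.Perm ι, ∀ i, u (σ i) = v i) →
      ∃ j ∈ J, eval u (esymm ι R j) ≠ eval v (esymm ι R j))
    {u v : ι → R} (huv : ∀ j ∈ J, eval u (esymm ι R j) = eval v (esymm ι R j)) (t : ℕ) :
    eval u (esymm ι R t) = eval v (esymm ι R t) := by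
  have horbit : ∃ σ : Equiv.Perm ι, ∀ i, u (σ i) = v i := by
    by_contra hsep
    obtain ⟨j, hj, hne⟩ := hSJ u v hsep
    exact hne (huv j hj)
  obtain ⟨σ, hσ⟩ := horbit
  rw [show v = u ∘ σ from funext fun i => (hσ i).symm, eval_esymm_comp_perm]

theorem stmt15_general {F : Type*} [Field F] (n m : ℕ)
    (J : Set ℕ)
    (A : Set (Fin m → ℕ))
    (hSJ : ∀ u v : Fin n → F,
      (¬ ∃ σ : Equiv.Perm (Fin n), ∀ i, u (σ i) = v i) →
      ∃ j ∈ J, eval u (esymm (Fin n) F j) ≠ eval v (esymm (Fin n) F j))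
    (hA : ∀ u v : Fin m × Fin n → F,
      (¬ ∃ σ : Equiv.Perm (Fin n), ∀ p : Fin m × Fin n, u (p.1, σ p.2) = v p) →
      ∃ t, 1 ≤ t ∧ t ≤ n ∧ ∃ α ∈ A, eval u (msym n m t α) ≠ eval v (msym n m t α)) :
    ∀ u v : Fin m × Fin n → F,
      (¬ ∃ σ : Equiv.Perm (Fin n), ∀ p : Fin m × Fin n, u (p.1, σ p.2) = v p) →
      ∃ j ∈ J, ∃ α ∈ A, eval u (msym n m j α) ≠ eval v (msym n m j α) := by
  intro u v huv
  obtain ⟨t, -, -, α, hα, hne⟩ := hA u v huv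
  by_contra! hJ
  apply hne
  simp only [eval_msym] at hJ ⊢
  exact eval_esymm_eq_of_forall_mem hSJ (fun j hj => hJ j hj α hα) t

/-- if `{s_j | j ∈ J}` is separating for `F[V]^{S_n}` and
`{σ_t(α) | 1 ≤ t ≤ n, α ∈ A}` is separating for `F[V^m]^{S_n}`, then
`{σ_j(α) | j ∈ J, α ∈ A}` is separating for `F[V^m]^{S_n}`. -/
theorem stmt15 {F : Type*} [Field F] [Fintype F] (n m : ℕ)
    (J : Set ℕ) (hJ : ∀ j ∈ J, 1 ≤ j ∧ j ≤ n)
    (A : Set (Fin m → ℕ))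
    (hSJ : ∀ u v : Fin n → F,
      (¬ ∃ σ : Equiv.Perm (Fin n), ∀ i, u (σ i) = v i) →
      ∃ j ∈ J, eval u (esymm (Fin n) F j) ≠ eval v (esymm (Fin n) F j))
    (hA : ∀ u v : Fin m × Fin n → F,
      (¬ ∃ σ : Equiv.Perm (Fin n), ∀ p : Fin m × Fin n, u (p.1, σ p.2) = v p) →
      ∃ t, 1 ≤ t ∧ t ≤ n ∧ ∃ α ∈ A, eval u (msym n m t α) ≠ eval v (msym n m t α)) :
    ∀ u v : Fin m × Fin n → F,
      (¬ ∃ σ : Equiv.Perm (Fin n), ∀ p : Fin m × Fin n, u (p.1, σ p.2) = v p) →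
      ∃ j ∈ J, ∃ α ∈ A, eval u (msym n m j α) ≠ eval v (msym n m j α) :=
  stmt15_general n m J A hSJ hA
end

section
/- Let F = F_2, m ≥ 2, and let τ, θ ∈ ℕ^{2^m} with |τ| = |θ| = n; set Δ_i = τ_i − θ_i for 1 ≤ i ≤ 2^m. Then the following are equivalent: (A') for every 1 ≤ j ≤ m the vectors Del_j(e_τ) and Del_j(e_θ) belong to the same S_n-orbit on V^{m−1}; (B) for all 1 < i ≤ 2^m one has Δ_i = (−1)^{ξ(i−1)} Δ_1, where ξ(i) is the sum of the binary digits of i. -/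
/-!
Deleting component `j` of `e_τ` leaves, at each position, the bits of the cell index other
than bit `k = m - 1 - j`. Two cells carry the same such pattern exactly when they differ at most
in bit `k`, so (A') for `j` says that `τ` and `θ` give the same total mass to every pair
`{c, c xor 2^k}`, i.e. `Δ (c xor 2^k) = -Δ c`. As `k` ranges over all bits this says that `Δ`
changes sign whenever one bit of the cell index is flipped; flipping a bit also flips the
parity of the binary digit sum, which gives (B), and conversely.
-/

open MvPolynomial

/-- The index of the cell containing position `p`, when `ℕ` is divided into consecutive
cells of lengths `τ 0, τ 1, …, τ (N-1)` (positions and cells are 0-indexed):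
it is the number of cells whose end lies at or before `p`. -/
def cellIndex {N : ℕ} (τ : Fin N → ℕ) (p : ℕ) : ℕ :=
  (Finset.univ.filter (fun c : Fin N => ∑ c' ∈ Finset.Iic c, τ c' ≤ p)).card

/-- The orbit representative `e_τ ∈ V^m` attached to `τ ∈ ℕ^(2^m)` with `|τ| = n`:
its `j`-th component (`j` 0-indexed, corresponding to `j+1` in the paper) is the
concatenation `(1^{b_1}, 0^{b_2}, 1^{b_3}, 0^{b_4}, …)` where `b_r` is the sum of `τ`
over the `r`-th block of length `2^(m-j-1)`; equivalently the position `i` entry is `1`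
exactly when the binary digit number `m-j-1` of the cell index of `i` is `0`. -/
def eTau (m n : ℕ) (τ : Fin (2 ^ m) → ℕ) : Fin m × Fin n → ZMod 2 :=
  fun ji => if Nat.testBit (cellIndex τ (ji.2 : ℕ)) (m - 1 - (ji.1 : ℕ)) then 0 else 1

open Finset

lemma digits_two_sum_bit (b : Bool) (n : ℕ) :
    (Nat.digits 2 (Nat.bit b n)).sum = b.toNat + (Nat.digits 2 n).sum := by
  rcases Nat.eq_zero_or_pos (Nat.bit b n) with h | h
  · obtain ⟨rfl, rfl⟩ : b = false ∧ n = 0 := by cases b <;> simp_all [Nat.bit_val]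
    simp
  · have hb := b.toNat_lt
    rw [Nat.digits_def' one_lt_two h, List.sum_cons, Nat.bit_val, Nat.mul_add_mod,
      Nat.mul_add_div two_pos, Nat.mod_eq_of_lt hb, Nat.div_eq_of_lt hb, add_zero]

lemma neg_one_pow_digits_two_sum_xor_two_pow {R : Type*} [Ring R] (k c : ℕ) :
    (-1 : R) ^ (Nat.digits 2 (c ^^^ 2 ^ k)).sum = -(-1) ^ (Nat.digits 2 c).sum := by
  induction k generalizing c with
  | zero =>
    rw [← Nat.bit_testBit_zero_shiftRight_one c, pow_zero, show 1 = Nat.bit true 0 from rfl,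
      Nat.xor_bit, digits_two_sum_bit, digits_two_sum_bit]
    cases c.testBit 0 <;> simp [pow_add]
  | succ k ih =>
    rw [← Nat.bit_testBit_zero_shiftRight_one c, pow_succ',
      show 2 * 2 ^ k = Nat.bit false (2 ^ k) by simp [Nat.bit_val], Nat.xor_bit,
      digits_two_sum_bit, digits_two_sum_bit, pow_add, pow_add, ih]
    simp

lemma xor_two_pow_lt {c k : ℕ} (h : c.testBit k) : c ^^^ 2 ^ k < c :=
  Nat.lt_of_testBit k (by simp [h]) h fun i hi => by simp [hi.ne]

lemma testBit_eq_except_iff {a b k : ℕ} :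
    (∀ i, i ≠ k → a.testBit i = b.testBit i) ↔ a = b ∨ a = b ^^^ 2 ^ k := by
  constructor
  · intro h
    by_cases hk : a.testBit k = b.testBit k
    · exact .inl <| Nat.eq_of_testBit_eq fun i => if hi : i = k then hi ▸ hk else h i hi
    · refine .inr <| Nat.eq_of_testBit_eq fun i => ?_
      by_cases hi : i = k
      · subst hi; cases ha : a.testBit i <;> cases hb : b.testBit i <;> simp_all
      · simp [h i hi, Ne.symm hi]
  · rintro (rfl | rfl) i hi <;> simp [Ne.symm hi]

def bitFlip {m : ℕ} (k : Fin m) (c : Fin (2 ^ m)) : Fin (2 ^ m) :=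
  ⟨c ^^^ 2 ^ (k : ℕ), Nat.xor_lt_two_pow c.isLt (Nat.pow_lt_pow_right one_lt_two k.isLt)⟩

section bitFlip
variable {m : ℕ} (k : Fin m) (c : Fin (2 ^ m))

@[simp] lemma val_bitFlip : (bitFlip k c : ℕ) = c ^^^ 2 ^ (k : ℕ) := rfl

@[simp] lemma bitFlip_bitFlip : bitFlip k (bitFlip k c) = c :=
  Fin.ext (Nat.xor_xor_cancel_right _ _)

lemma bitFlip_ne : bitFlip k c ≠ c := fun h => by
  simpa using congrArg (fun x : Fin (2 ^ m) => (x : ℕ).testBit k) h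

lemma testBit_eq_except_iff_bitFlip (c' : Fin (2 ^ m)) :
    (∀ b : Fin m, b ≠ k → (c' : ℕ).testBit b = (c : ℕ).testBit b) ↔
      c' = c ∨ c' = bitFlip k c := by
  rw [Fin.ext_iff, Fin.ext_iff, val_bitFlip, ← testBit_eq_except_iff]
  refine ⟨fun h i hi => ?_, fun h b hb => h b (Fin.val_injective.ne hb)⟩
  by_cases him : i < m
  · exact h ⟨i, him⟩ (fun e => hi (congrArg Fin.val e))
  · have hm : 2 ^ m ≤ 2 ^ i := Nat.pow_le_pow_right two_pos (not_lt.1 him)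
    rw [Nat.testBit_lt_two_pow (c'.isLt.trans_le hm), Nat.testBit_lt_two_pow (c.isLt.trans_le hm)]

end bitFlip

theorem forall_bitFlip_eq_neg_iff {R : Type*} [Ring R] {m : ℕ} (f : Fin (2 ^ m) → R) :
    (∀ k c, f (bitFlip k c) = -f c) ↔ ∀ c, f c = (-1) ^ (Nat.digits 2 c).sum * f 0 := by
  constructor
  · intro h c
    induction hv : (c : ℕ) using Nat.strong_induction_on generalizing c with
    | _ v ih =>
      subst hv
      obtain hc | hc := eq_or_ne (c : ℕ) 0
      · obtain rfl : c = 0 := by simp [Fin.ext_iff, hc]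
        simp
      obtain ⟨k, hk, -⟩ := Nat.exists_most_significant_bit hc
      have hkm : k < m := by
        by_contra! hkm
        rw [Nat.testBit_lt_two_pow (c.isLt.trans_le (Nat.pow_le_pow_right two_pos hkm))] at hk
        exact Bool.false_ne_true hk
      have hlt : (bitFlip ⟨k, hkm⟩ c : ℕ) < c := xor_two_pow_lt hk
      rw [← bitFlip_bitFlip ⟨k, hkm⟩ c, h, ih _ hlt _ rfl, bitFlip_bitFlip, val_bitFlip,
        neg_one_pow_digits_two_sum_xor_two_pow, neg_mul, neg_neg]
  · intro h k c
    rw [h, h c, val_bitFlip, neg_one_pow_digits_two_sum_xor_two_pow, neg_mul]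

lemma lt_card_filter_iff_of_antitone {N : ℕ} {P : Fin N → Prop} [DecidablePred P]
    (hP : Antitone P) (c : Fin N) : (c : ℕ) < #{x | P x} ↔ P c := by
  constructor
  · intro h
    by_contra hc
    have hsub : ({x | P x} : Finset (Fin N)) ⊆ Iio c := fun x hx =>
      mem_Iio.2 <| lt_of_not_ge fun hcx => hc (hP hcx (mem_filter.1 hx).2)
    have := card_le_card hsub
    rw [Fin.card_Iio] at this
    omega
  · intro hc
    have hsub : Iic c ⊆ ({x | P x} : Finset (Fin N)) := fun x hx =>
      mem_filter.2 ⟨mem_univ x, hP (mem_Iic.1 hx) hc⟩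
    have := card_le_card hsub
    rw [Fin.card_Iic] at this
    omega

section cellIndex
variable {N : ℕ} (τ : Fin N → ℕ)

lemma lt_cellIndex_iff (p : ℕ) (c : Fin N) :
    (c : ℕ) < cellIndex τ p ↔ ∑ c' ∈ Iic c, τ c' ≤ p :=
  lt_card_filter_iff_of_antitone
    (fun _ _ hab h => (sum_le_sum_of_subset (Iic_subset_Iic.2 hab)).trans h) c

lemma le_cellIndex_iff (p : ℕ) (c : Fin N) :
    (c : ℕ) ≤ cellIndex τ p ↔ ∑ c' ∈ Iio c, τ c' ≤ p := by
  obtain ⟨N, rfl⟩ := Nat.exists_eq_succ_of_ne_zero c.pos.ne'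
  cases c using Fin.cases with
  | zero =>
    exact iff_of_true (by simp) (by rw [← bot_eq_zero, Iio_bot, sum_empty]; exact p.zero_le)
  | succ d =>
    have hIio : Iio d.succ = Iic d.castSucc := by
      ext x; simp [Fin.lt_def, Fin.le_def]
    rw [hIio, ← lt_cellIndex_iff, Fin.val_succ, Fin.val_castSucc, Nat.succ_le_iff]

lemma cellIndex_eq_iff (p : ℕ) (c : Fin N) :
    cellIndex τ p = c ↔ ∑ c' ∈ Iio c, τ c' ≤ p ∧ p < ∑ c' ∈ Iio c, τ c' + τ c := by
  rw [← le_cellIndex_iff, sum_Iio_add_eq_sum_Iic, ← not_le, ← lt_cellIndex_iff]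
  omega

lemma cellIndex_lt {n : ℕ} (hτ : ∑ c, τ c = n) {p : ℕ} (hp : p < n) :
    cellIndex τ p < N := by
  obtain ⟨N, rfl⟩ : ∃ N', N = N' + 1 := Nat.exists_eq_succ_of_ne_zero fun h => by
    subst h; simp at hτ; omega
  by_contra! h
  have := (lt_cellIndex_iff τ p (Fin.last N)).1 (by simpa using h)
  rw [← Fin.top_eq_last, Iic_top, hτ] at this
  omega

lemma card_filter_cellIndex_eq {n : ℕ} (hτ : ∑ c, τ c = n) (c : Fin N) :
    #{i : Fin n | cellIndex τ i = c} = τ c := by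
  have hle : ∑ c' ∈ Iio c, τ c' + τ c ≤ n :=
    hτ ▸ (sum_Iio_add_eq_sum_Iic (f := τ) c).symm ▸ sum_le_sum_of_subset (subset_univ _)
  rw [← card_map Fin.valEmbedding,
    show τ c = #(Ico (∑ c' ∈ Iio c, τ c') (∑ c' ∈ Iio c, τ c' + τ c)) by simp]
  congr 1
  ext p
  simp only [mem_map, mem_filter, mem_univ, true_and, Fin.valEmbedding_apply, mem_Ico,
    cellIndex_eq_iff]
  constructor
  · rintro ⟨i, hi, rfl⟩
    exact hi
  · intro h
    exact ⟨⟨p, by omega⟩, h, rfl⟩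

def cellFin {n : ℕ} (hτ : ∑ c, τ c = n) (i : Fin n) : Fin N :=
  ⟨cellIndex τ i, cellIndex_lt τ hτ i.isLt⟩

lemma card_filter_comp_cellFin {n : ℕ} (hτ : ∑ c, τ c = n) {X : Type*} [DecidableEq X]
    (g : Fin N → X) (x : X) : #{i | g (cellFin τ hτ i) = x} = ∑ c with g c = x, τ c := by
  rw [card_eq_sum_card_fiberwise (f := cellFin τ hτ) (t := {c | g c = x})
    fun i hi => by simpa using hi]
  refine sum_congr rfl fun c hc => ?_
  rw [← card_filter_cellIndex_eq τ hτ c]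
  congr 1
  ext i
  simp only [mem_filter, mem_univ, true_and] at hc ⊢
  constructor
  · rintro ⟨-, rfl⟩
    rfl
  · intro h
    obtain rfl : cellFin τ hτ i = c := Fin.ext h
    exact ⟨hc, rfl⟩

end cellIndex

lemma exists_perm_comp_eq_iff_card_filter {α X : Type*} [Fintype α] [DecidableEq X]
    (u v : α → X) :
    (∃ σ : Equiv.Perm α, ∀ i, u (σ i) = v i) ↔ ∀ x, #{i | u i = x} = #{i | v i = x} := by
  simp only [← Fintype.card_subtype]
  constructor
  · rintro ⟨σ, hσ⟩ x
    exact (Fintype.card_congr (σ.subtypeEquiv fun i => by rw [hσ])).symm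
  · intro h
    exact ⟨Equiv.ofFiberEquiv fun x => Fintype.equivOfCardEq (h x).symm,
      Equiv.ofFiberEquiv_map _⟩

def bitsExcept {m : ℕ} (k : Fin m) (c : Fin (2 ^ m)) : {b : Fin m // b ≠ k} → Bool :=
  fun b => (c : ℕ).testBit b

lemma filter_bitsExcept_eq {m : ℕ} (k : Fin m) (c : Fin (2 ^ m)) :
    ({c' | bitsExcept k c' = bitsExcept k c} : Finset (Fin (2 ^ m))) = {c, bitFlip k c} := by
  ext c'
  simp only [mem_filter, mem_univ, true_and, mem_insert, mem_singleton, funext_iff,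
    Subtype.forall, bitsExcept, ← testBit_eq_except_iff_bitFlip]

theorem exists_perm_bitsExcept_iff {m n : ℕ} (k : Fin m) {τ θ : Fin (2 ^ m) → ℕ}
    (hτ : ∑ c, τ c = n) (hθ : ∑ c, θ c = n) :
    (∃ σ : Equiv.Perm (Fin n), ∀ i,
        bitsExcept k (cellFin τ hτ (σ i)) = bitsExcept k (cellFin θ hθ i)) ↔
      ∀ c, τ c + τ (bitFlip k c) = θ c + θ (bitFlip k c) := by
  rw [exists_perm_comp_eq_iff_card_filter (fun i => bitsExcept k (cellFin τ hτ i))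
    (fun i => bitsExcept k (cellFin θ hθ i))]
  simp only [card_filter_comp_cellFin]
  constructor
  · intro h c
    simpa [filter_bitsExcept_eq, sum_pair (bitFlip_ne k c).symm] using h (bitsExcept k c)
  · intro h x
    by_cases hx : ∃ c, bitsExcept k c = x
    · obtain ⟨c, rfl⟩ := hx
      rw [filter_bitsExcept_eq, sum_pair (bitFlip_ne k c).symm, sum_pair (bitFlip_ne k c).symm]
      exact h c
    · rw [not_exists] at hx
      simp [hx]

lemma eTau_eq_eTau_iff {m n : ℕ} (τ θ : Fin (2 ^ m) → ℕ) (j : Fin m) (i i' : Fin n) :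
    eTau m n τ (j, i) = eTau m n θ (j, i') ↔
      (cellIndex τ i).testBit j.rev = (cellIndex θ i').testBit j.rev := by
  rw [Fin.val_rev, show m - (j + 1) = m - 1 - j by omega]
  unfold eTau
  split_ifs <;> simp_all

lemma forall_ne_eTau_eq_iff {m n : ℕ} {τ θ : Fin (2 ^ m) → ℕ} (hτ : ∑ c, τ c = n)
    (hθ : ∑ c, θ c = n) (j : Fin m) (σ : Equiv.Perm (Fin n)) :
    (∀ j' : Fin m, j' ≠ j → ∀ i : Fin n, eTau m n τ (j', σ i) = eTau m n θ (j', i)) ↔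
      ∀ i, bitsExcept j.rev (cellFin τ hτ (σ i)) = bitsExcept j.rev (cellFin θ hθ i) := by
  simp only [funext_iff, Subtype.forall, bitsExcept, cellFin, eTau_eq_eTau_iff]
  refine ⟨fun h i b hb => ?_, fun h j' hj' i => h i j'.rev (Fin.rev_injective.ne hj')⟩
  rw [← Fin.rev_rev b] at hb ⊢
  exact h b.rev (Fin.rev_injective.ne_iff.1 hb) i

theorem stmt16_general (m n : ℕ) (τ θ : Fin (2 ^ m) → ℕ)
    (hτ : ∑ c, τ c = n) (hθ : ∑ c, θ c = n) :
    -- (A'): deleting any one component, e_τ and e_θ lie in the same S_n-orbit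
    (∀ j : Fin m, ∃ σ : Equiv.Perm (Fin n), ∀ j' : Fin m, j' ≠ j → ∀ i : Fin n,
        eTau m n τ (j', σ i) = eTau m n θ (j', i)) ↔
    -- (B)
    (∀ c : Fin (2 ^ m), c ≠ 0 →
        (τ c : ℤ) - (θ c : ℤ) =
          (-1) ^ ((Nat.digits 2 (c : ℕ)).sum) * ((τ 0 : ℤ) - (θ 0 : ℤ))) := by
  have orbit_iff (j : Fin m) := (exists_congr (forall_ne_eTau_eq_iff hτ hθ j)).trans
    (exists_perm_bitsExcept_iff j.rev hτ hθ)
  have pair_iff (k : Fin m) (c : Fin (2 ^ m)) :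
      τ c + τ (bitFlip k c) = θ c + θ (bitFlip k c) ↔
        (τ (bitFlip k c) : ℤ) - θ (bitFlip k c) = -((τ c : ℤ) - θ c) := by
    omega
  rw [forall_congr' orbit_iff]
  refine (Fin.revPerm.forall_congr_right (q := fun k =>
    ∀ c, τ c + τ (bitFlip k c) = θ c + θ (bitFlip k c))).trans ?_
  simp only [pair_iff, forall_bitFlip_eq_neg_iff fun c => (τ c : ℤ) - θ c]
  exact ⟨fun h c _ => h c, fun h c => if hc : c = 0 then by simp [hc] else h c hc⟩

/-- for `τ, θ ∈ ℕ^(2^m)` with `|τ| = |θ| = n` and `m ≥ 2`, the following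
are equivalent: (A') for every `j` the vectors `Del_j(e_τ)` and `Del_j(e_θ)` lie in the
same `S_n`-orbit on `V^(m-1)`; (B) `Δ_i = (-1)^{ξ(i-1)} Δ_1` for all `1 < i ≤ 2^m`,
where `Δ_i = τ_i - θ_i` and `ξ` is the binary digit sum. (Here indices are 0-indexed,
so (B) reads `Δ_c = (-1)^{ξ(c)} Δ_0` for `c ≠ 0`.) -/
theorem stmt16 (m n : ℕ) (hm : 2 ≤ m) (τ θ : Fin (2 ^ m) → ℕ)
    (hτ : ∑ c, τ c = n) (hθ : ∑ c, θ c = n) :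
    -- (A'): deleting any one component, e_τ and e_θ lie in the same S_n-orbit
    (∀ j : Fin m, ∃ σ : Equiv.Perm (Fin n), ∀ j' : Fin m, j' ≠ j → ∀ i : Fin n,
        eTau m n τ (j', σ i) = eTau m n θ (j', i)) ↔
    -- (B)
    (∀ c : Fin (2 ^ m), c ≠ 0 →
        (τ c : ℤ) - (θ c : ℤ) =
          (-1) ^ ((Nat.digits 2 (c : ℕ)).sum) * ((τ 0 : ℤ) - (θ 0 : ℤ))) :=
  stmt16_general m n τ θ hτ hθ
end
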